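/- The coset axis x_m = x_{A_m/A_{m-1}} in the Matsuo algebra of the Weyl group of A_n (i.e., id_{Sym(m+1)} - id_{Sym(m)}) has central charge m(2+α(m-3)) / (4(1+α(m-1))(1+α(m-2))). In particular, specializing α = 1/4 gives central charge 1 - 6/((m+2)(m+3)) = m(m+5)/((m+2)(m+3)). -/

import Mathlib

/-!
Write `Σ_k` for the sum of `ρ t` over the transpositions `t` of `Sym(k)`. A transposition of
`Sym(k)` fails to commute with exactly `2(k-2)` other transpositions of `Sym(k)`, so pairing
`Σ_k` with any of its terms gives `1 + α(k-2)`. Hence, for `j ≤ k`, `B(Σ_k, Σ_j)` is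
`C(j,2)(1 + α(k-2))`. For the coset axis `x = Σ_{m+1}/(1 + α(m-1)) - Σ_m/(1 + α(m-2))` this
gives `B(x, x) = C(m+1,2)/(1 + α(m-1)) - 2 C(m,2)/(1 + α(m-2)) + C(m,2)/(1 + α(m-2))`.
-/

open Finset Equiv

namespace Equiv.Perm

variable {ι : Type*} [DecidableEq ι]

theorem not_commute_swap_swap {a b c : ι} (hab : a ≠ b) (hac : a ≠ c) (hbc : b ≠ c) :
    ¬Commute (swap a b) (swap a c) := fun h => by
  simpa [swap_apply_of_ne_of_ne hab.symm hbc, hac] using congr($h.eq b)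

theorem swap_right_injective (a : ι) : Function.Injective (swap a) :=
  fun b c h => by simpa using congr($h a)

variable [Fintype ι]

def swapsIn (s : Finset ι) : Finset (Perm ι) :=
  s.offDiag.image fun p => swap p.1 p.2

theorem mem_swapsIn {s : Finset ι} {g : Perm ι} :
    g ∈ swapsIn s ↔ ∃ a ∈ s, ∃ b ∈ s, a ≠ b ∧ swap a b = g := by
  simp [swapsIn, and_assoc]

theorem swap_mem_swapsIn {s : Finset ι} {a b : ι} (ha : a ∈ s) (hb : b ∈ s) (hab : a ≠ b) :
    swap a b ∈ swapsIn s :=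
  mem_swapsIn.2 ⟨a, ha, b, hb, hab, rfl⟩

theorem swapsIn_mono {s t : Finset ι} (h : s ⊆ t) : swapsIn s ⊆ swapsIn t :=
  image_subset_image (offDiag_mono h)

theorem mem_swapsIn_iff_isSwap {s : Finset ι} {g : Perm ι} :
    g ∈ swapsIn s ↔ g.IsSwap ∧ ∀ x ∉ s, g x = x := by
  constructor
  · rw [mem_swapsIn]
    rintro ⟨a, ha, b, hb, hab, rfl⟩
    exact ⟨⟨a, b, hab, rfl⟩, fun x hx =>
      swap_apply_of_ne_of_ne (ne_of_mem_of_not_mem ha hx).symm (ne_of_mem_of_not_mem hb hx).symm⟩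
  · rintro ⟨⟨a, b, hab, rfl⟩, hfix⟩
    have hmem : ∀ x, swap a b x ≠ x → x ∈ s := fun x hx => by_contra fun h => hx (hfix x h)
    exact swap_mem_swapsIn (hmem a (by simpa using hab.symm)) (hmem b (by simpa using hab)) hab

theorem swapsIn_insert {s : Finset ι} {a : ι} (ha : a ∉ s) :
    swapsIn (insert a s) = swapsIn s ∪ s.image (swap a) := by
  rw [swapsIn, offDiag_insert ha, image_union, image_union, ← swapsIn, union_assoc]
  congr 1
  ext g
  simp [swap_comm]

theorem card_swapsIn (s : Finset ι) : #(swapsIn s) = (#s).choose 2 := by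
  induction s using Finset.induction_on with
  | empty => rfl
  | insert a s ha ih =>
    have hdisj : _root_.Disjoint (swapsIn s) (s.image (swap a)) := by
      refine disjoint_left.2 fun g hg hg' => ?_
      obtain ⟨b, hb, rfl⟩ := mem_image.1 hg'
      obtain ⟨-, hfix⟩ := mem_swapsIn_iff_isSwap.1 hg
      exact ne_of_mem_of_not_mem hb ha (by simpa using hfix a ha)
    rw [swapsIn_insert ha, card_union_of_disjoint hdisj, ih,
      card_image_of_injective _ (swap_right_injective a), card_insert_of_notMem ha,
      Nat.choose_succ_succ, Nat.choose_one_right, add_comm]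

open scoped Classical in
theorem filter_not_commute_swapsIn {s : Finset ι} {c d : ι} (hc : c ∈ s) (hd : d ∈ s)
    (hcd : c ≠ d) :
    (swapsIn s).filter (fun u => u ≠ swap c d ∧ ¬Commute u (swap c d))
      = (s \ {c, d}).image (swap c) ∪ (s \ {c, d}).image (swap d) := by
  ext u
  simp only [mem_filter, mem_union, mem_image, mem_sdiff, mem_insert, mem_singleton, not_or]
  constructor
  · rintro ⟨hu, hne, hnc⟩
    obtain ⟨a, ha, b, hb, hab, rfl⟩ := mem_swapsIn.1 hu
    have hmeet : a = c ∨ a = d ∨ b = c ∨ b = d := by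
      by_contra! h
      exact hnc (disjoint_swap_swap (by simp [*, Ne.symm])).commute
    rcases hmeet with rfl | rfl | rfl | rfl
    · exact .inl ⟨b, ⟨hb, hab.symm, fun h => hne (by rw [h])⟩, rfl⟩
    · exact .inr ⟨b, ⟨hb, fun h => hne (by rw [h, swap_comm]), hab.symm⟩, rfl⟩
    · exact .inl ⟨a, ⟨ha, hab, fun h => hne (by rw [h, swap_comm])⟩, swap_comm _ _⟩
    · exact .inr ⟨a, ⟨ha, fun h => hne (by rw [h]), hab⟩, swap_comm _ _⟩
  · rintro (⟨z, ⟨hz, hzc, hzd⟩, rfl⟩ | ⟨z, ⟨hz, hzc, hzd⟩, rfl⟩)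
    · refine ⟨swap_mem_swapsIn hc hz (Ne.symm hzc), fun h => hzd ?_,
        not_commute_swap_swap (Ne.symm hzc) hcd hzd⟩
      simpa using congr($h c)
    · refine ⟨swap_mem_swapsIn hd hz (Ne.symm hzd), fun h => hzc ?_, ?_⟩
      · simpa [swap_apply_of_ne_of_ne hcd.symm (Ne.symm hzd)] using congr($h d)
      · rw [swap_comm c d]
        exact not_commute_swap_swap (Ne.symm hzd) hcd.symm hzc

open scoped Classical in
theorem card_filter_not_commute_swapsIn {s : Finset ι} {c d : ι} (hc : c ∈ s) (hd : d ∈ s)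
    (hcd : c ≠ d) :
    #((swapsIn s).filter (fun u => u ≠ swap c d ∧ ¬Commute u (swap c d))) = 2 * (#s - 2) := by
  have hdisj : _root_.Disjoint ((s \ {c, d}).image (swap c)) ((s \ {c, d}).image (swap d)) := by
    refine disjoint_left.2 ?_
    simp only [mem_image, mem_sdiff, mem_insert, mem_singleton, not_or]
    rintro _ ⟨z, ⟨-, hzc, -⟩, rfl⟩ ⟨w, ⟨-, hwc, -⟩, h⟩
    simpa [swap_apply_of_ne_of_ne hcd (Ne.symm hwc), Ne.symm hzc] using congr($h c)
  rw [filter_not_commute_swapsIn hc hd hcd, card_union_of_disjoint hdisj,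
    card_image_of_injective _ (swap_right_injective c),
    card_image_of_injective _ (swap_right_injective d),
    card_sdiff_of_subset (insert_subset hc (singleton_subset_iff.2 hd)), card_pair hcd, two_mul]

open scoped Classical in
theorem swapsIn_filter_val_lt (N k : ℕ) :
    swapsIn (univ.filter fun x : Fin N => (x : ℕ) < k)
      = univ.filter fun g : Perm (Fin N) =>
          g.IsSwap ∧ ∀ x : Fin N, k ≤ (x : ℕ) → g x = x := by
  ext g
  simp [mem_swapsIn_iff_isSwap, not_lt]

end Equiv.Perm

section MatsuoForm

open Equiv.Perm
open scoped Classical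

variable {ι V : Type*} [Fintype ι] [DecidableEq ι] [AddCommGroup V] [Module ℚ V]

/-- The Gram form of the Matsuo algebra on the axes `ρ t` of the transpositions `t`. -/
def IsMatsuoForm (α : ℚ) (ρ : Perm ι → V) (B : V →ₗ[ℚ] V →ₗ[ℚ] ℚ) : Prop :=
  ∀ c d : Perm ι, c.IsSwap → d.IsSwap →
    B (ρ c) (ρ d) = if c = d then 1 else if Commute c d then 0 else α / 2

variable {α : ℚ} {ρ : Perm ι → V} {B : V →ₗ[ℚ] V →ₗ[ℚ] ℚ}

theorem IsMatsuoForm.apply_comm (hB : IsMatsuoForm α ρ B) {c d : Perm ι} (hc : c.IsSwap)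
    (hd : d.IsSwap) : B (ρ c) (ρ d) = B (ρ d) (ρ c) := by
  rw [hB c d hc hd, hB d c hd hc]
  exact if_congr eq_comm rfl (if_congr Commute.symm_iff rfl rfl)

theorem IsMatsuoForm.sum_swapsIn_comm (hB : IsMatsuoForm α ρ B) (s t : Finset ι) :
    B (∑ u ∈ swapsIn s, ρ u) (∑ v ∈ swapsIn t, ρ v)
      = B (∑ v ∈ swapsIn t, ρ v) (∑ u ∈ swapsIn s, ρ u) := by
  simp only [map_sum, LinearMap.sum_apply]
  rw [sum_comm]
  exact sum_congr rfl fun u hu => sum_congr rfl fun v hv =>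
    hB.apply_comm (mem_swapsIn_iff_isSwap.1 hu).1 (mem_swapsIn_iff_isSwap.1 hv).1

theorem IsMatsuoForm.sum_swapsIn_apply (hB : IsMatsuoForm α ρ B) {s : Finset ι} {t : Perm ι}
    (ht : t ∈ swapsIn s) : B (∑ u ∈ swapsIn s, ρ u) (ρ t) = 1 + α * (#s - 2) := by
  obtain ⟨c, hc, d, hd, hcd, rfl⟩ := mem_swapsIn.1 ht
  have hsplit : ∀ u ∈ swapsIn s, B (ρ u) (ρ (swap c d)) = (if u = swap c d then 1 else 0)
      + if u ≠ swap c d ∧ ¬Commute u (swap c d) then α / 2 else 0 := fun u hu => by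
    rw [hB u _ (mem_swapsIn_iff_isSwap.1 hu).1 (mem_swapsIn_iff_isSwap.1 ht).1]
    split_ifs <;> simp_all
  have hcard : 2 ≤ #s :=
    card_pair hcd ▸ card_le_card (insert_subset hc (singleton_subset_iff.2 hd))
  rw [map_sum, LinearMap.sum_apply, sum_congr rfl hsplit, sum_add_distrib, sum_ite_eq', if_pos ht,
    ← sum_filter, sum_const, nsmul_eq_mul, card_filter_not_commute_swapsIn hc hd hcd]
  push_cast [Nat.cast_sub hcard]
  ring

theorem IsMatsuoForm.sum_swapsIn_sum_swapsIn (hB : IsMatsuoForm α ρ B) {s t : Finset ι}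
    (hst : s ⊆ t) :
    B (∑ u ∈ swapsIn t, ρ u) (∑ v ∈ swapsIn s, ρ v)
      = #(swapsIn s) * (1 + α * (#t - 2)) := by
  rw [map_sum, sum_congr rfl fun v hv => hB.sum_swapsIn_apply (swapsIn_mono hst hv), sum_const,
    nsmul_eq_mul]

end MatsuoForm

theorem apply_inv_smul_sub_inv_smul_self {K V : Type*} [Field K] [AddCommGroup V] [Module K V]
    (B : V →ₗ[K] V →ₗ[K] K) {X Y : V} {e f a b : K} (ha : a ≠ 0) (hb : b ≠ 0)
    (hXX : B X X = e * a) (hXY : B X Y = f * a) (hYX : B Y X = f * a) (hYY : B Y Y = f * b) :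
    B (a⁻¹ • X - b⁻¹ • Y) (a⁻¹ • X - b⁻¹ • Y) = e / a - f / b := by
  simp only [map_sub, map_smul, LinearMap.sub_apply, LinearMap.smul_apply, smul_eq_mul, hXX, hXY,
    hYX, hYY]
  field_simp
  ring

open scoped Classical in
theorem cc_Am_coset_axis_general
    {A : Type*} [NonUnitalNonAssocCommRing A]
    [Module ℚ A]
    (n m : ℕ) (hmn : m ≤ n)
    (α : ℚ) (ρ : Equiv.Perm (Fin (n+1)) → A)
    (B : A →ₗ[ℚ] A →ₗ[ℚ] ℚ)
    (hB : ∀ c d : Perm (Fin (n+1)), c.IsSwap → d.IsSwap →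
      B (ρ c) (ρ d) = if c = d then 1 else if Commute c d then 0 else α / 2)
    (hdenE : 1 + α * ((m : ℚ) - 1) ≠ 0) (hdenF : 1 + α * ((m : ℚ) - 2) ≠ 0)
    (E F : Finset (Perm (Fin (n+1))))
    (hE : E = univ.filter fun g : Perm (Fin (n+1)) =>
      g.IsSwap ∧ ∀ x : Fin (n+1), m + 1 ≤ (x : ℕ) → g x = x)
    (hF : F = univ.filter fun g : Perm (Fin (n+1)) =>
      g.IsSwap ∧ ∀ x : Fin (n+1), m ≤ (x : ℕ) → g x = x)
    (x : A)
    (hx : x = (1 + α * ((m : ℚ) - 1))⁻¹ • ∑ e ∈ E, ρ e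
            - (1 + α * ((m : ℚ) - 2))⁻¹ • ∑ f ∈ F, ρ f) :
    (1/2 : ℚ) * B x x
        = (m : ℚ) * (2 + α * ((m : ℚ) - 3)) /
            (4 * (1 + α * ((m : ℚ) - 1)) * (1 + α * ((m : ℚ) - 2))) ∧
    (α = 1/4 →
      (1/2 : ℚ) * B x x = 1 - 6 / (((m : ℚ) + 2) * ((m : ℚ) + 3)) ∧
      (1/2 : ℚ) * B x x = (m : ℚ) * ((m : ℚ) + 5) / (((m : ℚ) + 2) * ((m : ℚ) + 3))) := by
  replace hB : IsMatsuoForm α ρ B := hB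
  rw [← Perm.swapsIn_filter_val_lt] at hE hF
  set s := univ.filter fun x : Fin (n+1) => (x : ℕ) < m + 1
  set s' := univ.filter fun x : Fin (n+1) => (x : ℕ) < m
  have hs : #s = m + 1 := by rw [Fin.card_filter_val_lt]; omega
  have hs' : #s' = m := by rw [Fin.card_filter_val_lt]; omega
  have hss' : s' ⊆ s := monotone_filter_right _ fun x _ (hx : (x : ℕ) < m) => by omega
  have hBxx : B x x = #(Perm.swapsIn s) / (1 + α * ((m : ℚ) - 1))
      - #(Perm.swapsIn s') / (1 + α * ((m : ℚ) - 2)) := by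
    rw [hx, hE, hF]
    refine apply_inv_smul_sub_inv_smul_self B hdenE hdenF ?_ ?_ ?_ ?_
    · rw [hB.sum_swapsIn_sum_swapsIn subset_rfl, hs]; push_cast; ring
    · rw [hB.sum_swapsIn_sum_swapsIn hss', hs]; push_cast; ring
    · rw [hB.sum_swapsIn_comm, hB.sum_swapsIn_sum_swapsIn hss', hs]; push_cast; ring
    · rw [hB.sum_swapsIn_sum_swapsIn subset_rfl, hs']
  have hcc : (1/2 : ℚ) * B x x = (m : ℚ) * (2 + α * ((m : ℚ) - 3)) /
      (4 * (1 + α * ((m : ℚ) - 1)) * (1 + α * ((m : ℚ) - 2))) := by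
    rw [hBxx, Perm.card_swapsIn, Perm.card_swapsIn, hs, hs', Nat.cast_choose_two,
      Nat.cast_choose_two]
    push_cast
    field_simp
    ring
  refine ⟨hcc, fun hα => ?_⟩
  have hm2 : (m : ℚ) + 2 ≠ 0 := by positivity
  have hm3 : (m : ℚ) + 3 ≠ 0 := by positivity
  rw [hcc, hα, show (1 : ℚ) + 1 / 4 * (m - 1) = (m + 3) / 4 by ring,
    show (1 : ℚ) + 1 / 4 * (m - 2) = (m + 2) / 4 by ring]
  constructor <;> field_simp <;> ring

open scoped Classical in
/-- the coset axis `x_m = id_{Sym(m+1)} - id_{Sym(m)}` in the Matsuo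
algebra of the Weyl group of `A_n` (i.e. `Sym(n+1)` on its transpositions) has central
charge `m(2+α(m-3))/(4(1+α(m-1))(1+α(m-2)))`; at `α = 1/4` this equals
`1 - 6/((m+2)(m+3)) = m(m+5)/((m+2)(m+3))`. -/
theorem cc_Am_coset_axis
    {A : Type*} [NonUnitalNonAssocCommRing A]
    [Module ℚ A] [SMulCommClass ℚ A A] [IsScalarTower ℚ A A]
    (n m : ℕ) (hm : 1 ≤ m) (hmn : m ≤ n)
    (α : ℚ) (hα0 : α ≠ 0) (hα1 : α ≠ 1) (ρ : Equiv.Perm (Fin (n+1)) → A)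
    (B : A →ₗ[ℚ] A →ₗ[ℚ] ℚ)
    (hB : ∀ c d : Perm (Fin (n+1)), c.IsSwap → d.IsSwap →
      B (ρ c) (ρ d) = if c = d then 1 else if Commute c d then 0 else α / 2)
    (hdenE : 1 + α * ((m : ℚ) - 1) ≠ 0) (hdenF : 1 + α * ((m : ℚ) - 2) ≠ 0)
    (E F : Finset (Perm (Fin (n+1))))
    (hE : E = univ.filter fun g : Perm (Fin (n+1)) =>
      g.IsSwap ∧ ∀ x : Fin (n+1), m + 1 ≤ (x : ℕ) → g x = x)
    (hF : F = univ.filter fun g : Perm (Fin (n+1)) =>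
      g.IsSwap ∧ ∀ x : Fin (n+1), m ≤ (x : ℕ) → g x = x)
    (x : A)
    (hx : x = (1 + α * ((m : ℚ) - 1))⁻¹ • ∑ e ∈ E, ρ e
            - (1 + α * ((m : ℚ) - 2))⁻¹ • ∑ f ∈ F, ρ f) :
    (1/2 : ℚ) * B x x
        = (m : ℚ) * (2 + α * ((m : ℚ) - 3)) /
            (4 * (1 + α * ((m : ℚ) - 1)) * (1 + α * ((m : ℚ) - 2))) ∧
    (α = 1/4 →
      (1/2 : ℚ) * B x x = 1 - 6 / (((m : ℚ) + 2) * ((m : ℚ) + 3)) ∧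
      (1/2 : ℚ) * B x x = (m : ℚ) * ((m : ℚ) + 5) / (((m : ℚ) + 2) * ((m : ℚ) + 3))) :=
  cc_Am_coset_axis_general n m hmn α ρ B hB hdenE hdenF E F hE hF x hx
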